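/- arXiv:0803.1058 — 8 statements merged into one kernel-verified Lean document; each statement's English description precedes it below -/
import Mathlib

section
/- Let q be a real number with 0 < q < 1 and let B be a closed subset of the interval [0,1] satisfying {1} ∪ B = {1} ∪ q²B. Then either B ⊆ {0} or B = {0} ∪ {q^{2k} : k ∈ ℕ}. -/
/-!
Write `r = q²`. Away from `1`, the hypothesis says that `B` is invariant under both `x ↦ r x`
and `x ↦ x / r`. Dividing a positive `b ∈ B` by `r` repeatedly must reach `1` before leaving
`[0, 1]`, so `b` is a power of `r`; conversely, once `B` contains some `r ^ n`, dividing gives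
`1 ∈ B` and multiplying then gives every `r ^ k`. Closedness finally adds the limit `0`.
-/

namespace ScalingInvariant

variable {r : ℝ} {B : Set ℝ}

lemma exists_mul_eq_of_mem (hB : ({1} : Set ℝ) ∪ B = {1} ∪ (fun x => r * x) '' B)
    {b : ℝ} (hb : b ∈ B) (hb1 : b ≠ 1) : ∃ c ∈ B, r * c = b := by
  have : b ∈ ({1} : Set ℝ) ∪ (fun x => r * x) '' B := hB ▸ Or.inr hb
  rcases this with h | h
  · exact absurd h hb1
  · exact h

lemma mul_mem (hB : ({1} : Set ℝ) ∪ B = {1} ∪ (fun x => r * x) '' B)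
    {c : ℝ} (hc : c ∈ B) (hrc : r * c ≠ 1) : r * c ∈ B := by
  have : r * c ∈ ({1} : Set ℝ) ∪ B := hB ▸ Or.inr ⟨c, hc, rfl⟩
  rcases this with h | h
  · exact absurd h hrc
  · exact h

lemma exists_eq_pow_of_pos (hr0 : 0 < r) (hr1 : r < 1) (hBsub : B ⊆ Set.Icc 0 1)
    (hB : ({1} : Set ℝ) ∪ B = {1} ∪ (fun x => r * x) '' B) {b : ℝ} (hb : b ∈ B) (hb0 : 0 < b) :
    ∃ k : ℕ, b = r ^ k := by
  suffices key : ∀ N : ℕ, ∀ b ∈ B, r ^ N < b → ∃ k : ℕ, b = r ^ k by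
    obtain ⟨N, hN⟩ := exists_pow_lt_of_lt_one hb0 hr1
    exact key N b hb hN
  intro N
  induction N with
  | zero =>
    intro b hb hlt
    exact absurd (hBsub hb).2 (by simpa using hlt)
  | succ N ih =>
    intro b hb hlt
    by_cases hb1 : b = 1
    · exact ⟨0, by simp [hb1]⟩
    obtain ⟨c, hc, rfl⟩ := exists_mul_eq_of_mem hB hb hb1
    have hNc : r ^ N < c := lt_of_mul_lt_mul_left (by rwa [← pow_succ']) hr0.le
    obtain ⟨k, rfl⟩ := ih c hc hNc
    exact ⟨k + 1, (pow_succ' r k).symm⟩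

lemma one_mem_of_pow_mem (hr0 : 0 < r) (hr1 : r < 1)
    (hB : ({1} : Set ℝ) ∪ B = {1} ∪ (fun x => r * x) '' B) {n : ℕ} (hn : r ^ n ∈ B) :
    (1 : ℝ) ∈ B := by
  induction n with
  | zero => simpa using hn
  | succ n ih =>
    obtain ⟨c, hc, hrc⟩ :=
      exists_mul_eq_of_mem hB hn (pow_lt_one₀ hr0.le hr1 n.succ_ne_zero).ne
    rw [pow_succ'] at hrc
    exact ih (mul_left_cancel₀ hr0.ne' hrc ▸ hc)

lemma pow_mem_of_one_mem (hr0 : 0 < r) (hr1 : r < 1)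
    (hB : ({1} : Set ℝ) ∪ B = {1} ∪ (fun x => r * x) '' B) (h1 : (1 : ℝ) ∈ B) (k : ℕ) :
    r ^ k ∈ B := by
  induction k with
  | zero => simpa using h1
  | succ k ih =>
    rw [pow_succ']
    exact mul_mem hB ih (pow_succ' r k ▸ (pow_lt_one₀ hr0.le hr1 k.succ_ne_zero).ne)

theorem subset_zero_or_eq_zero_union_pow (hr0 : 0 < r) (hr1 : r < 1) (hBclosed : IsClosed B)
    (hBsub : B ⊆ Set.Icc 0 1) (hB : ({1} : Set ℝ) ∪ B = {1} ∪ (fun x => r * x) '' B) :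
    B ⊆ {0} ∨ B = ({0} : Set ℝ) ∪ {x : ℝ | ∃ k : ℕ, x = r ^ k} := by
  refine or_iff_not_imp_left.2 fun hB0 => ?_
  obtain ⟨b, hb, hb0⟩ : ∃ b ∈ B, b ≠ 0 := by simpa [Set.subset_def] using hB0
  obtain ⟨n, rfl⟩ := exists_eq_pow_of_pos hr0 hr1 hBsub hB hb ((hBsub hb).1.lt_of_ne' hb0)
  have hpow := pow_mem_of_one_mem hr0 hr1 hB (one_mem_of_pow_mem hr0 hr1 hB hb)
  have hzero : (0 : ℝ) ∈ B := hBclosed.mem_of_tendsto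
    (tendsto_pow_atTop_nhds_zero_of_lt_one hr0.le hr1) (Filter.Eventually.of_forall hpow)
  ext x
  constructor
  · intro hx
    rcases (hBsub hx).1.eq_or_lt with h | h
    · exact Or.inl h.symm
    · exact Or.inr (exists_eq_pow_of_pos hr0 hr1 hBsub hB hx h)
  · rintro (rfl | ⟨k, rfl⟩)
    exacts [hzero, hpow k]

end ScalingInvariant

/-- Let `q` be a real number with `0 < q < 1` and let `B` be a closed subset of
`[0,1]` satisfying `{1} ∪ B = {1} ∪ q²B`.  Then either `B ⊆ {0}` or
`B = {0} ∪ {q^(2k) : k ∈ ℕ}`. -/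
theorem spectrum_dichotomy_of_closed_scaling_invariant
    (q : ℝ) (hq0 : 0 < q) (hq1 : q < 1)
    (B : Set ℝ) (hBclosed : IsClosed B) (hBsub : B ⊆ Set.Icc 0 1)
    (hB : ({1} : Set ℝ) ∪ B = ({1} : Set ℝ) ∪ (fun x => q ^ 2 * x) '' B) :
    B ⊆ {0} ∨ B = ({0} : Set ℝ) ∪ {x : ℝ | ∃ k : ℕ, x = q ^ (2 * k)} := by
  simpa only [pow_mul] using ScalingInvariant.subset_zero_or_eq_zero_union_pow
    (by positivity) (pow_lt_one₀ hq0.le hq1 two_ne_zero) hBclosed hBsub hB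
end

section
/- Either b = 0, or the spectrum of b b* in 𝒜 equals {0} ∪ {q^{2k} : k ∈ ℕ}. -/
/-!
With `x = b b*`, the relations give `a a* = 1 - x` and `a* a = 1 - q² x`. Since `a a*` and `a* a`
have the same nonzero spectrum, the real spectrum `T ⊆ [0, 1]` of `x` satisfies `t ∈ T ↔ t / q² ∈ T`
for every `t ≠ 1`. A positive point of `T` can then be divided by `q²` only until it reaches `1`, so
it is a power of `q²`; and once `T ≠ {0}`, the orbit of `1` under `t ↦ q² t` lies in `T` and
accumulates at `0`.
-/

section ScalingInvariantSet

variable {r : ℝ} {T : Set ℝ}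

theorem pow_mem_of_mul_mem (h1 : 1 ∈ T) (hdown : ∀ t ∈ T, r * t ∈ T) (k : ℕ) : r ^ k ∈ T := by
  induction k with
  | zero => simpa using h1
  | succ k ih => simpa [pow_succ', mul_comm] using hdown _ ih

theorem one_mem_of_pow_mem (hr0 : 0 < r) (hr1 : r < 1) (hup : ∀ t ∈ T, t ≠ 1 → r⁻¹ * t ∈ T)
    {k : ℕ} (hk : r ^ k ∈ T) : 1 ∈ T := by
  induction k with
  | zero => simpa using hk
  | succ k ih =>
    refine ih ?_
    simpa [pow_succ', hr0.ne'] using hup _ hk (pow_lt_one₀ hr0.le hr1 k.succ_ne_zero).ne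

theorem exists_eq_pow_of_pow_lt (hr0 : 0 < r) (hle : ∀ t ∈ T, t ≤ 1)
    (hup : ∀ t ∈ T, t ≠ 1 → r⁻¹ * t ∈ T) (k : ℕ) :
    ∀ t ∈ T, r ^ k < t → ∃ j : ℕ, t = r ^ j := by
  induction k with
  | zero =>
    intro t ht hlt
    exact absurd (hle t ht) (by simpa using hlt)
  | succ k ih =>
    intro t ht hlt
    by_cases ht1 : t = 1
    · exact ⟨0, by simpa using ht1⟩
    obtain ⟨j, hj⟩ := ih _ (hup t ht ht1) (by
      rw [lt_inv_mul_iff₀ hr0, ← pow_succ']; exact hlt)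
    exact ⟨j + 1, by rw [pow_succ', ← hj, mul_inv_cancel_left₀ hr0.ne']⟩

theorem eq_insert_zero_range_pow (hr0 : 0 < r) (hr1 : r < 1) (hT : IsClosed T)
    (hsub : T ⊆ Set.Icc 0 1) (hne : ∃ t ∈ T, t ≠ 0) (hdown : ∀ t ∈ T, r * t ∈ T)
    (hup : ∀ t ∈ T, t ≠ 1 → r⁻¹ * t ∈ T) :
    T = insert 0 (Set.range (r ^ ·)) := by
  have hpos : ∀ t ∈ T, t ≠ 0 → ∃ j : ℕ, t = r ^ j := fun t ht ht0 ↦ by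
    obtain ⟨k, hk⟩ := exists_pow_lt_of_lt_one ((hsub ht).1.lt_of_ne' ht0) hr1
    exact exists_eq_pow_of_pow_lt hr0 (fun s hs ↦ (hsub hs).2) hup k t ht hk
  obtain ⟨t, ht, ht0⟩ := hne
  obtain ⟨j, rfl⟩ := hpos t ht ht0
  have hpow : ∀ k : ℕ, r ^ k ∈ T := pow_mem_of_mul_mem (one_mem_of_pow_mem hr0 hr1 hup ht) hdown
  have h0 : (0 : ℝ) ∈ T := hT.mem_of_tendsto (tendsto_pow_atTop_nhds_zero_of_lt_one hr0.le hr1)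
    (Filter.Eventually.of_forall hpow)
  ext s
  constructor
  · intro hs
    by_cases hs0 : s = 0
    · exact Or.inl hs0
    · obtain ⟨k, rfl⟩ := hpos s hs hs0
      exact Or.inr ⟨k, rfl⟩
  · rintro (rfl | ⟨k, rfl⟩)
    exacts [h0, hpow k]

end ScalingInvariantSet

namespace spectrum

variable {𝕜 A : Type*} [Field 𝕜] [Ring A] [Algebra 𝕜 A]

theorem one_sub_mem_one_sub_iff {x : A} {t : 𝕜} :
    1 - t ∈ spectrum 𝕜 (1 - x) ↔ t ∈ spectrum 𝕜 x := by
  rw [← map_one (algebraMap 𝕜 A), ← singleton_sub_eq]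
  simp

theorem mem_iff_of_mul_eq_one_sub {a b x y : A} (hab : a * b = 1 - x) (hba : b * a = 1 - y)
    {t : 𝕜} (ht : t ≠ 1) : t ∈ spectrum 𝕜 x ↔ t ∈ spectrum 𝕜 y := by
  have hne : 1 - t ∉ ({0} : Set 𝕜) := by simpa [sub_eq_zero] using ht.symm
  have := congrArg (1 - t ∈ ·) (nonzero_mul_comm (𝕜 := 𝕜) a b)
  simpa [hab, hba, hne, one_sub_mem_one_sub_iff] using this

theorem mem_iff_inv_mul_mem_of_mul_eq_one_sub_smul {a b x : A} {r : 𝕜} (hr : r ≠ 0)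
    (hab : a * b = 1 - x) (hba : b * a = 1 - r • x) {t : 𝕜} (ht : t ≠ 1) :
    t ∈ spectrum 𝕜 x ↔ r⁻¹ * t ∈ spectrum 𝕜 x := by
  rw [mem_iff_of_mul_eq_one_sub hab hba ht]
  conv_lhs => rw [← mul_inv_cancel_left₀ hr t]
  exact smul_mem_smul_iff (r := Units.mk0 r hr)

end spectrum

section CStarAlgebra

variable {A : Type*} [CStarAlgebra A]

theorem spectrum_mul_star_self_subset_Icc {a b : A} (h : a * star a + b * star b = 1) :
    spectrum ℝ (b * star b) ⊆ Set.Icc 0 1 := by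
  intro t ht
  have hnonneg (c : A) : ∀ s ∈ spectrum ℝ (c * star c), 0 ≤ s := by
    simpa using spectrum_star_mul_self_nonneg (b := star c)
  refine ⟨hnonneg b t ht, ?_⟩
  have h1t : 1 - t ∈ spectrum ℝ (a * star a) := by
    rwa [eq_sub_of_add_eq h, spectrum.one_sub_mem_one_sub_iff]
  linarith [hnonneg a _ h1t]

theorem exists_ne_zero_mem_spectrum_mul_star_self {b : A} (hb : b ≠ 0) :
    ∃ t ∈ spectrum ℝ (b * star b), t ≠ 0 := by
  by_contra! h
  exact hb <| (CStarRing.mul_star_self_eq_zero_iff b).mp <|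
    CFC.eq_zero_of_spectrum_subset_zero (R := ℝ) _ h (.mul_star_self b)

end CStarAlgebra

theorem spectrum_bbstar_SUq2_general
    {𝒜 : Type*} [NormedRing 𝒜] [StarRing 𝒜] [CStarRing 𝒜]
    [NormedAlgebra ℂ 𝒜] [CompleteSpace 𝒜] [StarModule ℂ 𝒜]
    (q : ℝ) (hq0 : 0 < q) (hq1 : q < 1) (a b : 𝒜)
    (h3 : b * star b = star b * b)
    (h4 : star a * a + ((q : ℂ) ^ 2) • (star b * b) = 1)
    (h5 : a * star a + b * star b = 1) :
    b = 0 ∨ spectrum ℂ (b * star b)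
      = ({0} : Set ℂ) ∪ {z : ℂ | ∃ k : ℕ, z = (q : ℂ) ^ (2 * k)} := by
  let _ : CStarAlgebra 𝒜 := ⟨⟩
  refine or_iff_not_imp_left.mpr fun hb ↦ ?_
  set x := b * star b
  have hr0 : 0 < q ^ 2 := by positivity
  have hr1 : q ^ 2 < 1 := by nlinarith
  have ha_mul_star : a * star a = 1 - x := eq_sub_of_add_eq h5
  have ha_star_mul : star a * a = 1 - (q ^ 2) • x := by
    rw [eq_sub_of_add_eq h4, ← h3, ← Complex.coe_smul]
    norm_cast
  have hscale {t : ℝ} (ht : t ≠ 1) : t ∈ spectrum ℝ x ↔ (q ^ 2)⁻¹ * t ∈ spectrum ℝ x :=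
    spectrum.mem_iff_inv_mul_mem_of_mul_eq_one_sub_smul hr0.ne' ha_mul_star ha_star_mul ht
  have hsub := spectrum_mul_star_self_subset_Icc h5
  have hspec := eq_insert_zero_range_pow hr0 hr1 (spectrum.isClosed x) hsub
    (exists_ne_zero_mem_spectrum_mul_star_self hb)
    (fun t ht ↦ by
      have hne : q ^ 2 * t < 1 := by nlinarith [(hsub ht).1, (hsub ht).2]
      exact (hscale hne.ne).mpr (by rwa [inv_mul_cancel_left₀ hr0.ne']))
    (fun t ht ht1 ↦ (hscale ht1).mp ht)
  rw [← (IsSelfAdjoint.mul_star_self b).spectrumRestricts.algebraMap_image, hspec]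
  ext z
  simp [pow_mul, eq_comm]

/-- In a unital C*-algebra `𝒜` with elements `a, b` satisfying the defining
relations of `SU_q(2)` (for a fixed real `0 < q < 1`), either `b = 0` or the spectrum of
`b b*` equals `{0} ∪ {q^(2k) : k ∈ ℕ}`. -/
theorem spectrum_bbstar_SUq2
    {𝒜 : Type*} [NormedRing 𝒜] [StarRing 𝒜] [CStarRing 𝒜]
    [NormedAlgebra ℂ 𝒜] [CompleteSpace 𝒜] [StarModule ℂ 𝒜]
    (q : ℝ) (hq0 : 0 < q) (hq1 : q < 1) (a b : 𝒜)
    (h1 : b * a = (q : ℂ) • (a * b))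
    (h2 : star b * a = (q : ℂ) • (a * star b))
    (h3 : b * star b = star b * b)
    (h4 : star a * a + ((q : ℂ) ^ 2) • (star b * b) = 1)
    (h5 : a * star a + b * star b = 1) :
    b = 0 ∨ spectrum ℂ (b * star b)
      = ({0} : Set ℂ) ∪ {z : ℂ | ∃ k : ℕ, z = (q : ℂ) ^ (2 * k)} :=
  spectrum_bbstar_SUq2_general q hq0 hq1 a b h3 h4 h5
end

section
/- For every n ∈ ℕ, writing j := n/2, one has (q^{8j+8} − q^{8j+6} − (4j+3)q^{4j+6} + (8j+6)q^{4j+4} − (4j+3)q^{4j+2} − q² + 1) / ((q^{4j+4} − 1)(q^{4j+2} − 1)) = ξ_q(2j + 3/2), and for every integer n ≥ 1, writing j := n/2, one has (−q^{8j+4} + q^{8j+2} + (4j+1)q^{4j+4} − (8j+2)q^{4j+2} + (4j+1)q^{4j} + q² − 1) / ((q^{4j+2} − 1)(q^{4j} − 1)) = −ξ_q(2j + 1/2). (These are the diagonal matrix elements, on the spin-up and spin-down spinor basis respectively, of the invariant one-form a* da + q² b db* + q² a da* + q² b* db of the SU_q(2) spectral triple.) -/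
noncomputable section

/-- The `q`-number `[α]_q = (q^α - q^(-α))/(q - q⁻¹)` (real exponents). -/
def qNum (q α : ℝ) : ℝ := (q ^ α - q ^ (-α)) / (q - q⁻¹)

/-- `ξ_q(s) = q([2s]_q - 2s)/([s+1/2]_q [s-1/2]_q)`. -/
def xiq (q s : ℝ) : ℝ :=
  q * (qNum q (2 * s) - 2 * s) / (qNum q (s + 1 / 2) * qNum q (s - 1 / 2))

private lemma mini (p A B C d e : ℝ) (hd : d ≠ 0) (hB : B ≠ 0) (hC : C ≠ 0) :
    p * (A / d - e) / ((B / d) * (C / d)) = p * d * (A - e * d) / (B * C) := by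
  field_simp

private lemma key1 (q u c : ℝ) (hq : q ≠ 0) (hu : u ≠ 0) (hqq : q - q⁻¹ ≠ 0)
    (h1 : u^2*q^4 - 1 ≠ 0) (h2 : u^2*q^2 - 1 ≠ 0)
    (hA : u*q^2 - (u*q^2)⁻¹ ≠ 0) (hB : u*q - (u*q)⁻¹ ≠ 0) :
    (u^4*q^8 - u^4*q^6 - c*(u^2*q^6) + (2*c)*(u^2*q^4) - c*(u^2*q^2) - q^2 + 1)
      / ((u^2*q^4 - 1) * (u^2*q^2 - 1))
    = q * ((u^2*q^3 - (u^2*q^3)⁻¹)/(q - q⁻¹) - c)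
        / (((u*q^2 - (u*q^2)⁻¹)/(q - q⁻¹)) * ((u*q - (u*q)⁻¹)/(q - q⁻¹))) := by
  rw [mini q _ _ _ _ _ hqq hA hB,
      div_eq_div_iff (mul_ne_zero h1 h2) (mul_ne_zero hA hB)]
  field_simp
  ring

private lemma key2 (q u c : ℝ) (hq : q ≠ 0) (hu : u ≠ 0) (hqq : q - q⁻¹ ≠ 0)
    (h1 : u^2*q^2 - 1 ≠ 0) (h2 : u^2 - 1 ≠ 0)
    (hA : u*q - (u*q)⁻¹ ≠ 0) (hB : u - u⁻¹ ≠ 0) :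
    (-(u^4*q^4) + u^4*q^2 + c*(u^2*q^4) - (2*c)*(u^2*q^2) + c*u^2 + q^2 - 1)
      / ((u^2*q^2 - 1) * (u^2 - 1))
    = -(q * ((u^2*q - (u^2*q)⁻¹)/(q - q⁻¹) - c)
        / (((u*q - (u*q)⁻¹)/(q - q⁻¹)) * ((u - u⁻¹)/(q - q⁻¹)))) := by
  rw [mini q _ _ _ _ _ hqq hA hB, ← neg_div,
      div_eq_div_iff (mul_ne_zero h1 h2) (mul_ne_zero hA hB)]
  field_simp
  ring

/-- the diagonal matrix elements, on the spin-up and spin-down spinor basis,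
of the invariant one-form `a* da + q² b db* + q² a da* + q² b* db` of the `SU_q(2)`
spectral triple equal `ξ_q(2j + 3/2)` and `-ξ_q(2j + 1/2)` respectively. -/
theorem xiq_matrix_elements (q : ℝ) (hq0 : 0 < q) (hq1 : q < 1) :
    (∀ n : ℕ, ∀ j : ℝ, j = (n : ℝ) / 2 →
      (q ^ (8 * j + 8) - q ^ (8 * j + 6) - (4 * j + 3) * q ^ (4 * j + 6)
          + (8 * j + 6) * q ^ (4 * j + 4) - (4 * j + 3) * q ^ (4 * j + 2) - q ^ 2 + 1)
        / ((q ^ (4 * j + 4) - 1) * (q ^ (4 * j + 2) - 1))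
      = xiq q (2 * j + 3 / 2)) ∧
    (∀ n : ℕ, 1 ≤ n → ∀ j : ℝ, j = (n : ℝ) / 2 →
      (-q ^ (8 * j + 4) + q ^ (8 * j + 2) + (4 * j + 1) * q ^ (4 * j + 4)
          - (8 * j + 2) * q ^ (4 * j + 2) + (4 * j + 1) * q ^ (4 * j : ℝ) + q ^ 2 - 1)
        / ((q ^ (4 * j + 2) - 1) * (q ^ (4 * j : ℝ) - 1))
      = - xiq q (2 * j + 1 / 2)) := by
  have hqne : q ≠ 0 := hq0.ne'
  have hqq : q - q⁻¹ ≠ 0 := by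
    have : 1 < q⁻¹ := (one_lt_inv₀ hq0).mpr hq1
    nlinarith
  have hlt : ∀ k : ℕ, 1 ≤ k → q ^ k < 1 := fun k hk =>
    pow_lt_one₀ hq0.le hq1 (by omega)
  have hinv : ∀ k : ℕ, 1 ≤ k → q ^ k - (q ^ k)⁻¹ ≠ 0 := fun k hk => by
    have h1 : q ^ k < 1 := hlt k hk
    have h2 : 1 < (q ^ k)⁻¹ := (one_lt_inv₀ (pow_pos hq0 k)).mpr h1
    exact sub_ne_zero.mpr (ne_of_lt (lt_trans h1 h2))
  constructor
  · intro n j hj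
    subst hj
    unfold xiq qNum
    have P : ∀ (x : ℝ) (a b : ℕ), x = (a : ℝ) * n + b →
        q ^ x = (q ^ n) ^ a * q ^ b := by
      intro x a b h
      rw [show x = ((n * a + b : ℕ) : ℝ) by push_cast; linarith, Real.rpow_natCast,
          pow_add, pow_mul]
    have PN : ∀ (x : ℝ) (a b : ℕ), x = -((a : ℝ) * n + b) →
        q ^ x = ((q ^ n) ^ a * q ^ b)⁻¹ := by
      intro x a b h
      rw [show x = -((n * a + b : ℕ) : ℝ) by push_cast; linarith,
          Real.rpow_neg hq0.le, Real.rpow_natCast, pow_add, pow_mul]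
    rw [P (8 * ((n:ℝ)/2) + 8) 4 8 (by push_cast; ring),
        P (8 * ((n:ℝ)/2) + 6) 4 6 (by push_cast; ring),
        P (4 * ((n:ℝ)/2) + 6) 2 6 (by push_cast; ring),
        P (4 * ((n:ℝ)/2) + 4) 2 4 (by push_cast; ring),
        P (4 * ((n:ℝ)/2) + 2) 2 2 (by push_cast; ring),
        P (2 * (2 * ((n:ℝ)/2) + 3/2)) 2 3 (by push_cast; ring),
        PN (-(2 * (2 * ((n:ℝ)/2) + 3/2))) 2 3 (by push_cast; ring),
        P (2 * ((n:ℝ)/2) + 3/2 + 1/2) 1 2 (by push_cast; ring),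
        PN (-(2 * ((n:ℝ)/2) + 3/2 + 1/2)) 1 2 (by push_cast; ring),
        P (2 * ((n:ℝ)/2) + 3/2 - 1/2) 1 1 (by push_cast; ring),
        PN (-(2 * ((n:ℝ)/2) + 3/2 - 1/2)) 1 1 (by push_cast; ring),
        show (4 * ((n:ℝ)/2) + 3) = 2 * (n:ℝ) + 3 by ring,
        show (8 * ((n:ℝ)/2) + 6) = 2 * (2 * (n:ℝ) + 3) by ring,
        show (2 * (2 * ((n:ℝ)/2) + 3/2)) = 2 * (n:ℝ) + 3 by ring,
        pow_one, pow_one]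
    have h1 : (q ^ n) ^ 2 * q ^ 4 - 1 ≠ 0 := by
      have := hlt (n * 2 + 4) (by omega)
      rw [pow_add, pow_mul] at this
      exact sub_ne_zero.mpr (ne_of_lt this)
    have h2 : (q ^ n) ^ 2 * q ^ 2 - 1 ≠ 0 := by
      have := hlt (n * 2 + 2) (by omega)
      rw [pow_add, pow_mul] at this
      exact sub_ne_zero.mpr (ne_of_lt this)
    have hA : q ^ n * q ^ 2 - (q ^ n * q ^ 2)⁻¹ ≠ 0 := by
      have := hinv (n + 2) (by omega)
      rwa [pow_add] at this
    have hB : q ^ n * q ^ 1 - (q ^ n * q ^ 1)⁻¹ ≠ 0 := by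
      have := hinv (n + 1) (by omega)
      rwa [pow_add] at this
    rw [pow_one] at hB
    exact key1 q (q ^ n) (2 * (n:ℝ) + 3) hqne (pow_ne_zero n hqne) hqq h1 h2 hA hB
  · intro n hn j hj
    subst hj
    unfold xiq qNum
    have P : ∀ (x : ℝ) (a b : ℕ), x = (a : ℝ) * n + b →
        q ^ x = (q ^ n) ^ a * q ^ b := by
      intro x a b h
      rw [show x = ((n * a + b : ℕ) : ℝ) by push_cast; linarith, Real.rpow_natCast,
          pow_add, pow_mul]
    have PN : ∀ (x : ℝ) (a b : ℕ), x = -((a : ℝ) * n + b) →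
        q ^ x = ((q ^ n) ^ a * q ^ b)⁻¹ := by
      intro x a b h
      rw [show x = -((n * a + b : ℕ) : ℝ) by push_cast; linarith,
          Real.rpow_neg hq0.le, Real.rpow_natCast, pow_add, pow_mul]
    have P0 : ∀ (x : ℝ) (a : ℕ), x = (a : ℝ) * n → q ^ x = (q ^ n) ^ a := by
      intro x a h
      rw [show x = ((n * a : ℕ) : ℝ) by push_cast; linarith, Real.rpow_natCast,
          pow_mul]
    have PN0 : ∀ (x : ℝ) (a : ℕ), x = -((a : ℝ) * n) → q ^ x = ((q ^ n) ^ a)⁻¹ := by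
      intro x a h
      rw [show x = -((n * a : ℕ) : ℝ) by push_cast; linarith,
          Real.rpow_neg hq0.le, Real.rpow_natCast, pow_mul]
    rw [P (8 * ((n:ℝ)/2) + 4) 4 4 (by push_cast; ring),
        P (8 * ((n:ℝ)/2) + 2) 4 2 (by push_cast; ring),
        P (4 * ((n:ℝ)/2) + 4) 2 4 (by push_cast; ring),
        P (4 * ((n:ℝ)/2) + 2) 2 2 (by push_cast; ring),
        P0 (4 * ((n:ℝ)/2)) 2 (by push_cast; ring),
        P (2 * (2 * ((n:ℝ)/2) + 1/2)) 2 1 (by push_cast; ring),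
        PN (-(2 * (2 * ((n:ℝ)/2) + 1/2))) 2 1 (by push_cast; ring),
        P (2 * ((n:ℝ)/2) + 1/2 + 1/2) 1 1 (by push_cast; ring),
        PN (-(2 * ((n:ℝ)/2) + 1/2 + 1/2)) 1 1 (by push_cast; ring),
        P0 (2 * ((n:ℝ)/2) + 1/2 - 1/2) 1 (by push_cast; ring),
        PN0 (-(2 * ((n:ℝ)/2) + 1/2 - 1/2)) 1 (by push_cast; ring),
        show (4 * ((n:ℝ)/2) + 1) = 2 * (n:ℝ) + 1 by ring,
        show (8 * ((n:ℝ)/2) + 2) = 2 * (2 * (n:ℝ) + 1) by ring,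
        show (2 * (2 * ((n:ℝ)/2) + 1/2)) = 2 * (n:ℝ) + 1 by ring,
        pow_one, pow_one]
    have h1 : (q ^ n) ^ 2 * q ^ 2 - 1 ≠ 0 := by
      have := hlt (n * 2 + 2) (by omega)
      rw [pow_add, pow_mul] at this
      exact sub_ne_zero.mpr (ne_of_lt this)
    have h2 : (q ^ n) ^ 2 - 1 ≠ 0 := by
      have := hlt (n * 2) (by omega)
      rw [pow_mul] at this
      exact sub_ne_zero.mpr (ne_of_lt this)
    have hA : q ^ n * q ^ 1 - (q ^ n * q ^ 1)⁻¹ ≠ 0 := by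
      have := hinv (n + 1) (by omega)
      rwa [pow_add] at this
    rw [pow_one] at hA
    have hB : q ^ n - (q ^ n)⁻¹ ≠ 0 := hinv n hn
    exact key2 q (q ^ n) (2 * (n:ℝ) + 1) hqne (pow_ne_zero n hqne) hqq h1 h2 hA hB
end
end

section
/- For every complex number s with Re(s) > 3, Σ_{k=0}^{∞} (k+1)(k+2)(k+3/2)^{−s} + Σ_{k=0}^{∞} k(k+1)(k+1/2)^{−s} = 2(2^{s−2} − 1)·ζ(s−2) − (1/2)(2^{s} − 1)·ζ(s). (The left-hand side is the spectral zeta function ζ_D(s) = Tr|D|^{−s} of the Dirac operator D of the SU_q(2) spectral triple, whose eigenvalues are 2j+3/2 with multiplicity (2j+1)(2j+2) and −(2j+1/2) with multiplicity 2j(2j+1), for 2j ∈ ℕ.) -/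
/-!
With `L(σ) = ∑ (k + 1/2)^(-σ)`, the odd-index part of `ζ` gives `L(σ) = (2^σ - 1) ζ(σ)`.
Since `k(k+1) = (k + 1/2)^2 - 1/4`, the second series is `L(s-2) - L(s)/4`, and the first
series is the same one shifted by one index (its `k = 0` term vanishes), so the total is twice it.
-/

open Complex

lemma hasSum_one_div_two_mul_add_one_cpow {σ : ℂ} (hσ : 1 < σ.re) :
    HasSum (fun k : ℕ => 1 / ((2 * k + 1 : ℕ) : ℂ) ^ σ) ((1 - 2 ^ (-σ)) * riemannZeta σ) := by
  set f : ℕ → ℂ := fun n => 1 / (n : ℂ) ^ σ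
  have hf : HasSum f (riemannZeta σ) := by
    rw [zeta_eq_tsum_one_div_nat_cpow hσ]
    exact (summable_one_div_nat_cpow.mpr hσ).hasSum
  have heven : HasSum (fun k => f (2 * k)) (2 ^ (-σ) * riemannZeta σ) := by
    refine (hf.mul_left _).congr_fun fun k => ?_
    simp only [f]
    rw [Nat.cast_mul, natCast_mul_natCast_cpow, Nat.cast_ofNat, cpow_neg]
    ring
  obtain ⟨T, hodd⟩ : Summable fun k => f (2 * k + 1) :=
    (summable_one_div_nat_cpow.mpr hσ).comp_injective fun a b hab => by omega
  have hT : T = (1 - 2 ^ (-σ)) * riemannZeta σ := by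
    linear_combination (heven.even_add_odd hodd).unique hf
  exact hT ▸ hodd

lemma add_half_cpow_neg_eq (k : ℕ) (σ : ℂ) :
    (((k : ℝ) + 1 / 2 : ℝ) : ℂ) ^ (-σ) = 2 ^ σ * (1 / ((2 * k + 1 : ℕ) : ℂ) ^ σ) := by
  have hcast : ((2 * k + 1 : ℕ) : ℂ) = ((2 : ℝ) : ℂ) * (((k : ℝ) + 1 / 2 : ℝ) : ℂ) := by
    push_cast; ring
  have htwo : (2 : ℂ) ^ σ ≠ 0 := by simp
  rw [hcast, mul_cpow_ofReal_nonneg zero_le_two (by positivity), cpow_neg, ofReal_ofNat]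
  field_simp

lemma hasSum_add_half_cpow_neg {σ : ℂ} (hσ : 1 < σ.re) :
    HasSum (fun k : ℕ => (((k : ℝ) + 1 / 2 : ℝ) : ℂ) ^ (-σ)) ((2 ^ σ - 1) * riemannZeta σ) := by
  have htwo : (2 : ℂ) ^ σ ≠ 0 := by simp
  have h := (hasSum_one_div_two_mul_add_one_cpow hσ).mul_left (2 ^ σ)
  rw [show 2 ^ σ * ((1 - 2 ^ (-σ)) * riemannZeta σ) = (2 ^ σ - 1) * riemannZeta σ by
    rw [cpow_neg]; field_simp] at h
  exact h.congr_fun (add_half_cpow_neg_eq · σ)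

lemma cpow_neg_sub_two {z : ℂ} (hz : z ≠ 0) (s : ℂ) : z ^ (-(s - 2)) = z ^ 2 * z ^ (-s) := by
  rw [show -(s - 2) = (2 : ℕ) + -s by push_cast; ring, cpow_add _ _ hz, cpow_natCast]

lemma hasSum_mul_add_one_mul_add_half_cpow_neg {s : ℂ} (hs : 3 < s.re) :
    HasSum (fun k : ℕ => (k : ℂ) * ((k : ℂ) + 1) * (((k : ℝ) + 1 / 2 : ℝ) : ℂ) ^ (-s))
      ((2 ^ (s - 2) - 1) * riemannZeta (s - 2) - (2 ^ s - 1) * riemannZeta s / 4) := by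
  have h₂ := hasSum_add_half_cpow_neg (σ := s - 2) (by rw [sub_re]; norm_num; linarith)
  have h₀ := hasSum_add_half_cpow_neg (σ := s) (by linarith)
  refine (h₂.sub (h₀.div_const 4)).congr_fun fun k => ?_
  rw [cpow_neg_sub_two (by norm_cast; positivity)]
  push_cast
  ring

/-- for `Re s > 3`, the spectral zeta function of the Dirac operator of the
`SU_q(2)` spectral triple satisfies
`Σ (k+1)(k+2)(k+3/2)^(-s) + Σ k(k+1)(k+1/2)^(-s) = 2(2^(s-2)-1)ζ(s-2) - (1/2)(2^s-1)ζ(s)`. -/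
theorem suq2_zeta_function_formula (s : ℂ) (hs : 3 < s.re) :
    (∑' k : ℕ, ((k : ℂ) + 1) * ((k : ℂ) + 2) * (((k : ℝ) + 3 / 2 : ℝ) : ℂ) ^ (-s))
      + (∑' k : ℕ, (k : ℂ) * ((k : ℂ) + 1) * (((k : ℝ) + 1 / 2 : ℝ) : ℂ) ^ (-s))
    = 2 * ((2 : ℂ) ^ (s - 2) - 1) * riemannZeta (s - 2)
      - (1 / 2) * ((2 : ℂ) ^ s - 1) * riemannZeta s := by
  have hg := hasSum_mul_add_one_mul_add_half_cpow_neg hs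
  have hshift : ∑' k : ℕ, ((k : ℂ) + 1) * ((k : ℂ) + 2) * (((k : ℝ) + 3 / 2 : ℝ) : ℂ) ^ (-s)
      = ∑' k : ℕ, (k : ℂ) * ((k : ℂ) + 1) * (((k : ℝ) + 1 / 2 : ℝ) : ℂ) ^ (-s) := by
    rw [hg.summable.tsum_eq_zero_add, Nat.cast_zero, zero_mul, zero_mul, zero_add]
    exact tsum_congr fun k => by push_cast; ring_nf
  rw [hshift, hg.tsum_eq]
  ring
end

section
/- For all β, β′ ∈ ℕ, the series Σ_{m=0}^{∞} (f_β(m) − 1) and Σ_{m=0}^{∞} (f_{β′}(m) − 1) converge absolutely, and lim_{N→∞} Σ_{m=0}^{N} ( f_β(m)·f_{β′}(N−m) − 1 ) = Σ_{m=0}^{∞} (f_β(m) − 1) + Σ_{m=0}^{∞} (f_{β′}(m) − 1). -/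
noncomputable section

/-- `f_β(m) = ∏_{i=1}^{β} (1 - q^(2(m+i)))`, the square of the factor
`q^↑_{m,β} = q_{m+1} ⋯ q_{m+β}` where `q_n = √(1 - q^(2n))`. -/
def fq (q : ℝ) (β m : ℕ) : ℝ := ∏ i ∈ Finset.range β, (1 - q ^ (2 * (m + i + 1)))

lemma fq_nonneg {q : ℝ} (hq0 : 0 < q) (hq1 : q < 1) (β m : ℕ) : 0 ≤ fq q β m :=
  Finset.prod_nonneg fun i _ => by
    have : q ^ (2 * (m + i + 1)) ≤ 1 := pow_le_one₀ hq0.le hq1.le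
    linarith

lemma fq_le_one {q : ℝ} (hq0 : 0 < q) (hq1 : q < 1) (β m : ℕ) : fq q β m ≤ 1 :=
  Finset.prod_le_one (fun i _ => by
      have : q ^ (2 * (m + i + 1)) ≤ 1 := pow_le_one₀ hq0.le hq1.le
      linarith)
    (fun i _ => by
      have : 0 ≤ q ^ (2 * (m + i + 1)) := by positivity
      linarith)

lemma fq_key {q : ℝ} (hq0 : 0 < q) (hq1 : q < 1) (β m : ℕ) :
    |fq q β m - 1| ≤ (β : ℝ) * q ^ 2 * (q ^ 2) ^ m := by
  have h1 := fq_le_one hq0 hq1 β m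
  rw [abs_sub_comm, abs_of_nonneg (by linarith)]
  have hbound : 1 - fq q β m ≤ (β : ℝ) * q ^ (2 * (m + 1)) := by
    induction β with
    | zero => simp [fq]
    | succ n ih =>
      have h0n := fq_nonneg hq0 hq1 n m
      have h1n := fq_le_one hq0 hq1 n m
      have hpow : q ^ (2 * (m + n + 1)) ≤ q ^ (2 * (m + 1)) :=
        pow_le_pow_of_le_one hq0.le hq1.le (by omega)
      have hpow0 : 0 ≤ q ^ (2 * (m + n + 1)) := by positivity
      have hprod : fq q (n + 1) m = fq q n m * (1 - q ^ (2 * (m + n + 1))) := by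
        rw [fq, Finset.prod_range_succ]; rfl
      rw [hprod]
      have := ih (fq_le_one hq0 hq1 n m)
      push_cast
      nlinarith
  calc 1 - fq q β m ≤ (β : ℝ) * q ^ (2 * (m + 1)) := hbound
    _ = (β : ℝ) * q ^ 2 * (q ^ 2) ^ m := by
        rw [← pow_mul]; ring_nf

/-- for all `β, β' ∈ ℕ` the series `Σ (f_β(m) - 1)` and `Σ (f_{β'}(m) - 1)`
converge absolutely, and
`lim_{N→∞} Σ_{m=0}^{N} (f_β(m) f_{β'}(N-m) - 1) = Σ (f_β(m) - 1) + Σ (f_{β'}(m) - 1)`. -/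
theorem fq_convolution_limit (q : ℝ) (hq0 : 0 < q) (hq1 : q < 1) (β β' : ℕ) :
    Summable (fun m : ℕ => fq q β m - 1) ∧
    Summable (fun m : ℕ => fq q β' m - 1) ∧
    Filter.Tendsto
      (fun N : ℕ => ∑ m ∈ Finset.range (N + 1), (fq q β m * fq q β' (N - m) - 1))
      Filter.atTop
      (nhds ((∑' m : ℕ, (fq q β m - 1)) + ∑' m : ℕ, (fq q β' m - 1))) := by
  have hr0 : (0:ℝ) ≤ q ^ 2 := sq_nonneg q
  have hr1 : q ^ 2 < 1 := by nlinarith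
  have hgeo : Summable (fun m : ℕ => (q ^ 2) ^ m) := summable_geometric_of_lt_one hr0 hr1
  have hs : ∀ γ : ℕ, Summable (fun m : ℕ => fq q γ m - 1) := fun γ =>
    Summable.of_norm <| Summable.of_nonneg_of_le (fun _ => norm_nonneg _)
      (fun m => fq_key hq0 hq1 γ m) (hgeo.mul_left _)
  refine ⟨hs β, hs β', ?_⟩
  have h1 : Filter.Tendsto (fun N : ℕ => ∑ m ∈ Finset.range (N + 1), (fq q β m - 1))
      Filter.atTop (nhds (∑' m : ℕ, (fq q β m - 1))) :=
    ((hs β).hasSum.tendsto_sum_nat).comp (Filter.tendsto_add_atTop_nat 1)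
  have h2 : Filter.Tendsto (fun N : ℕ => ∑ m ∈ Finset.range (N + 1), (fq q β' (N - m) - 1))
      Filter.atTop (nhds (∑' m : ℕ, (fq q β' m - 1))) := by
    have := ((hs β').hasSum.tendsto_sum_nat).comp (Filter.tendsto_add_atTop_nat 1)
    refine this.congr fun N => ?_
    have := Finset.sum_range_reflect (fun m => fq q β' m - 1) (N + 1)
    simpa using this.symm
  have h3 : Filter.Tendsto
      (fun N : ℕ => ∑ m ∈ Finset.range (N + 1), (fq q β m - 1) * (fq q β' (N - m) - 1))
      Filter.atTop (nhds 0) := by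
    have haux : Summable (fun n : ℕ => ((n : ℝ) ^ 1 * (q ^ 2) ^ n) + (q ^ 2) ^ n) :=
      (summable_pow_mul_geometric_of_norm_lt_one 1
        (by rwa [Real.norm_eq_abs, abs_of_nonneg hr0])).add hgeo
    have htend0 : Filter.Tendsto (fun N : ℕ => ((N : ℝ) + 1) * (q ^ 2) ^ N)
        Filter.atTop (nhds 0) := by
      refine (haux.tendsto_atTop_zero).congr fun n => ?_
      ring
    have htend : Filter.Tendsto
        (fun N : ℕ => (β : ℝ) * q ^ 2 * ((β' : ℝ) * q ^ 2) * (((N : ℝ) + 1) * (q ^ 2) ^ N))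
        Filter.atTop (nhds 0) := by
      simpa using htend0.const_mul ((β : ℝ) * q ^ 2 * ((β' : ℝ) * q ^ 2))
    refine squeeze_zero_norm (fun N => ?_) htend
    calc ‖∑ m ∈ Finset.range (N + 1), (fq q β m - 1) * (fq q β' (N - m) - 1)‖
        ≤ ∑ m ∈ Finset.range (N + 1), ‖(fq q β m - 1) * (fq q β' (N - m) - 1)‖ :=
          norm_sum_le _ _
      _ ≤ ∑ m ∈ Finset.range (N + 1),
            (β : ℝ) * q ^ 2 * ((β' : ℝ) * q ^ 2) * (q ^ 2) ^ N := by
          refine Finset.sum_le_sum fun m hm => ?_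
          have hm' : m ≤ N := by
            have := Finset.mem_range.mp hm; omega
          rw [Real.norm_eq_abs, abs_mul]
          have b1 := fq_key hq0 hq1 β m
          have b2 := fq_key hq0 hq1 β' (N - m)
          have hsplit : (q ^ 2 : ℝ) ^ m * (q ^ 2) ^ (N - m) = (q ^ 2) ^ N := by
            rw [← pow_add]; congr 1; omega
          have ha0 : (0:ℝ) ≤ |fq q β m - 1| := abs_nonneg _
          have hb0 : (0:ℝ) ≤ |fq q β' (N - m) - 1| := abs_nonneg _
          have hc0 : (0:ℝ) ≤ (β : ℝ) * q ^ 2 * (q ^ 2) ^ m := by positivity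
          have hd0 : (0:ℝ) ≤ (β' : ℝ) * q ^ 2 * (q ^ 2) ^ (N - m) := by positivity
          calc |fq q β m - 1| * |fq q β' (N - m) - 1|
              ≤ ((β : ℝ) * q ^ 2 * (q ^ 2) ^ m) * ((β' : ℝ) * q ^ 2 * (q ^ 2) ^ (N - m)) :=
                mul_le_mul b1 b2 hb0 hc0
            _ = (β : ℝ) * q ^ 2 * ((β' : ℝ) * q ^ 2) * ((q ^ 2) ^ m * (q ^ 2) ^ (N - m)) := by
                ring
            _ = (β : ℝ) * q ^ 2 * ((β' : ℝ) * q ^ 2) * (q ^ 2) ^ N := by rw [hsplit]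
      _ = ((N : ℝ) + 1) * ((β : ℝ) * q ^ 2 * ((β' : ℝ) * q ^ 2) * (q ^ 2) ^ N) := by
          rw [Finset.sum_const, Finset.card_range]; ring
      _ = (β : ℝ) * q ^ 2 * ((β' : ℝ) * q ^ 2) * (((N : ℝ) + 1) * (q ^ 2) ^ N) := by ring
  have := (h1.add h2).add h3
  simp only [add_zero] at this
  refine this.congr fun N => ?_
  rw [← Finset.sum_add_distrib, ← Finset.sum_add_distrib]
  refine Finset.sum_congr rfl fun m _ => ?_
  ring
end
end

section
/- One has b φ₁ = −φ₂ and b φ₂ = 0; explicitly, for all a₀, a₁, a₂, a₃ ∈ A: φ₁(a₀a₁, a₂) − φ₁(a₀, a₁a₂) + φ₁(a₂a₀, a₁) = −φ₂(a₀, a₁, a₂), and φ₂(a₀a₁, a₂, a₃) − φ₂(a₀, a₁a₂, a₃) + φ₂(a₀, a₁, a₂a₃) − φ₂(a₃a₀, a₁, a₂) = 0. -/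
noncomputable section

/-- `φ₁(a₀,a₁) = τ(a₀ [D,a₁] D⁻¹)`. -/
def phi1 {R : Type*} [Ring R] [Algebra ℂ R] (τ : R →ₗ[ℂ] ℂ) (D : Rˣ) (a0 a1 : R) : ℂ :=
  τ (a0 * (↑D * a1 - a1 * ↑D) * ↑D⁻¹)

/-- `φ₂(a₀,a₁,a₂) = τ(a₀ [D,a₁] D⁻¹ [D,a₂] D⁻¹)`. -/
def phi2 {R : Type*} [Ring R] [Algebra ℂ R] (τ : R →ₗ[ℂ] ℂ) (D : Rˣ) (a0 a1 a2 : R) : ℂ :=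
  τ (a0 * (↑D * a1 - a1 * ↑D) * ↑D⁻¹ * (↑D * a2 - a2 * ↑D) * ↑D⁻¹)

/-- `bφ₁ = -φ₂` and `bφ₂ = 0`, where `b` is the Hochschild coboundary:
for all `a₀, a₁, a₂, a₃` in the unital subalgebra `A`,
`φ₁(a₀a₁,a₂) - φ₁(a₀,a₁a₂) + φ₁(a₂a₀,a₁) = -φ₂(a₀,a₁,a₂)` and
`φ₂(a₀a₁,a₂,a₃) - φ₂(a₀,a₁a₂,a₃) + φ₂(a₀,a₁,a₂a₃) - φ₂(a₃a₀,a₁,a₂) = 0`. -/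
theorem hochschild_coboundary_phi1_phi2
    {R : Type*} [Ring R] [Algebra ℂ R] (τ : R →ₗ[ℂ] ℂ)
    (htr : ∀ x y : R, τ (x * y) = τ (y * x)) (D : Rˣ)
    (A : Subalgebra ℂ R) (a0 a1 a2 a3 : R)
    (h0 : a0 ∈ A) (h1 : a1 ∈ A) (h2 : a2 ∈ A) (h3 : a3 ∈ A) :
    (phi1 τ D (a0 * a1) a2 - phi1 τ D a0 (a1 * a2) + phi1 τ D (a2 * a0) a1
      = - phi2 τ D a0 a1 a2) ∧
    (phi2 τ D (a0 * a1) a2 a3 - phi2 τ D a0 (a1 * a2) a3 + phi2 τ D a0 a1 (a2 * a3)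
      - phi2 τ D (a3 * a0) a1 a2 = 0) := by
  have hi1 : (↑D⁻¹ : R) * ↑D = 1 := D.inv_mul
  have hi2 : (↑D : R) * ↑D⁻¹ = 1 := D.mul_inv
  have hred : ∀ u v : R, u * ↑D⁻¹ * (↑D * v - v * ↑D) * ↑D⁻¹
      = u * (v * ↑D⁻¹) - u * (↑D⁻¹ * v) := by
    intro u v
    have h3 : u * ↑D⁻¹ * (↑D * v - v * ↑D) * ↑D⁻¹
        = u * (((↑D⁻¹ : R) * ↑D) * (v * ↑D⁻¹)) - u * (↑D⁻¹ * (v * ((↑D : R) * ↑D⁻¹))) := by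
      noncomm_ring
    rw [h3, hi1, hi2]
    noncomm_ring
  have t3 : τ ((a2 * a0) * (↑D * a1 - a1 * ↑D) * ↑D⁻¹)
      = τ ((a0 * (↑D * a1 - a1 * ↑D) * ↑D⁻¹) * a2) := by
    rw [show (a2 * a0) * (↑D * a1 - a1 * ↑D) * (↑D⁻¹ : R)
        = a2 * (a0 * (↑D * a1 - a1 * ↑D) * ↑D⁻¹) from by noncomm_ring]
    exact htr _ _
  have t4 : τ ((a3 * a0) * (↑D * a1 - a1 * ↑D) * ↑D⁻¹ * (↑D * a2 - a2 * ↑D) * ↑D⁻¹)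
      = τ ((a0 * (↑D * a1 - a1 * ↑D) * ↑D⁻¹ * (↑D * a2 - a2 * ↑D) * ↑D⁻¹) * a3) := by
    rw [show (a3 * a0) * (↑D * a1 - a1 * ↑D) * (↑D⁻¹ : R) * (↑D * a2 - a2 * ↑D) * ↑D⁻¹
        = a3 * (a0 * (↑D * a1 - a1 * ↑D) * ↑D⁻¹ * (↑D * a2 - a2 * ↑D) * ↑D⁻¹) from by
          noncomm_ring]
    exact htr _ _
  constructor
  · simp only [phi1, phi2]
    rw [t3]
    simp only [hred]
    rw [← map_sub, ← map_add, ← map_neg]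
    congr 1
    noncomm_ring
  · simp only [phi2]
    rw [t4]
    simp only [hred]
    rw [← map_sub, ← map_add, ← map_sub, ← map_zero τ]
    congr 1
    noncomm_ring
end
end

section
/- One has B₀φ₃ = N b′φ₁; explicitly, for all a₀, a₁, a₂ ∈ A: τ([D,a₀] D^{−1} [D,a₁] D^{−1} [D,a₂] D^{−1}) = ((1 + λ + λ²) b′φ₁)(a₀, a₁, a₂), where b′φ₁(a₀,a₁,a₂) = φ₁(a₀a₁,a₂) − φ₁(a₀,a₁a₂). Consequently B φ₃ = 3 B₀ φ₃. -/
noncomputable section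

/-- `B₀φ₃(a₀,a₁,a₂) = φ₃(1,a₀,a₁,a₂) = τ([D,a₀] D⁻¹ [D,a₁] D⁻¹ [D,a₂] D⁻¹)`. -/
def B0phi3 {R : Type*} [Ring R] [Algebra ℂ R] (τ : R →ₗ[ℂ] ℂ) (D : Rˣ)
    (a0 a1 a2 : R) : ℂ :=
  τ ((↑D * a0 - a0 * ↑D) * ↑D⁻¹ * (↑D * a1 - a1 * ↑D) * ↑D⁻¹ * (↑D * a2 - a2 * ↑D) * ↑D⁻¹)

/-- `b′φ₁(a₀,a₁,a₂) = φ₁(a₀a₁,a₂) - φ₁(a₀,a₁a₂)`. -/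
def bprimePhi1 {R : Type*} [Ring R] [Algebra ℂ R] (τ : R →ₗ[ℂ] ℂ) (D : Rˣ)
    (a0 a1 a2 : R) : ℂ :=
  phi1 τ D (a0 * a1) a2 - phi1 τ D a0 (a1 * a2)

/-- Auxiliary: the key identity for arbitrary elements. -/
theorem B0phi3_key {R : Type*} [Ring R] [Algebra ℂ R] (τ : R →ₗ[ℂ] ℂ)
    (htr : ∀ x y : R, τ (x * y) = τ (y * x)) (D : Rˣ) (a0 a1 a2 : R) :
    B0phi3 τ D a0 a1 a2
      = bprimePhi1 τ D a0 a1 a2 + bprimePhi1 τ D a2 a0 a1 + bprimePhi1 τ D a1 a2 a0 := by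
  unfold B0phi3 bprimePhi1 phi1
  simp only [mul_sub, sub_mul, mul_assoc, Units.inv_mul_cancel_left,
    Units.mul_inv_cancel_left, Units.mul_inv, Units.inv_mul, mul_one, one_mul, map_sub]
  have h1 : τ (↑D * (a0 * (a1 * (a2 * ↑D⁻¹)))) = τ (a0 * (a1 * a2)) := by
    rw [htr]; simp only [mul_assoc, Units.inv_mul, mul_one]
  have h3a : τ (↑D * (a0 * (↑D⁻¹ * (a1 * (↑D * (a2 * ↑D⁻¹))))))
      = τ (a0 * (↑D⁻¹ * (a1 * (↑D * a2)))) := by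
    rw [htr]; simp only [mul_assoc, Units.inv_mul, mul_one]
  have h3b : τ (a1 * (↑D * (a2 * (a0 * ↑D⁻¹))))
      = τ (a0 * (↑D⁻¹ * (a1 * (↑D * a2)))) := by
    rw [htr]; simp only [mul_assoc]
    rw [htr]; simp only [mul_assoc, Units.inv_mul, mul_one]
    rw [htr]; simp only [mul_assoc]
  have h5 : τ (a2 * (↑D * (a0 * (a1 * ↑D⁻¹))))
      = τ (↑D * (a0 * (a1 * (↑D⁻¹ * a2)))) := by
    rw [htr]; simp only [mul_assoc]
  have h6 : τ (a2 * (a0 * (↑D * (a1 * ↑D⁻¹))))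
      = τ (a0 * (↑D * (a1 * (↑D⁻¹ * a2)))) := by
    rw [htr]; simp only [mul_assoc]
  have h7 : τ (a1 * (a2 * (↑D * (a0 * ↑D⁻¹))))
      = τ (↑D * (a0 * (↑D⁻¹ * (a1 * a2)))) := by
    rw [htr]; simp only [mul_assoc]
    rw [htr]; simp only [mul_assoc]
  linear_combination h1 - h3a + h3b + h5 - h6 - h7

/-- `B₀φ₃ = N b′φ₁`; explicitly, for all `a₀, a₁, a₂ ∈ A`,
`τ([D,a₀]D⁻¹[D,a₁]D⁻¹[D,a₂]D⁻¹) = ((1 + λ + λ²) b′φ₁)(a₀,a₁,a₂)`.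
Consequently `Bφ₃ = 3 B₀φ₃`. -/
theorem B0phi3_eq_N_bprime_phi1
    {R : Type*} [Ring R] [Algebra ℂ R] (τ : R →ₗ[ℂ] ℂ)
    (htr : ∀ x y : R, τ (x * y) = τ (y * x)) (D : Rˣ) (A : Subalgebra ℂ R) :
    (∀ a0 a1 a2 : R, a0 ∈ A → a1 ∈ A → a2 ∈ A →
      B0phi3 τ D a0 a1 a2
        = bprimePhi1 τ D a0 a1 a2 + bprimePhi1 τ D a2 a0 a1 + bprimePhi1 τ D a1 a2 a0) ∧
    (∀ a0 a1 a2 : R, a0 ∈ A → a1 ∈ A → a2 ∈ A →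
      B0phi3 τ D a0 a1 a2 + B0phi3 τ D a2 a0 a1 + B0phi3 τ D a1 a2 a0
        = 3 * B0phi3 τ D a0 a1 a2) := by
  refine ⟨fun a0 a1 a2 _ _ _ => B0phi3_key τ htr D a0 a1 a2, fun a0 a1 a2 _ _ _ => ?_⟩
  rw [B0phi3_key τ htr D a0 a1 a2, B0phi3_key τ htr D a2 a0 a1, B0phi3_key τ htr D a1 a2 a0]
  ring
end
end

section
/- One has b B₀ φ₂ = 2 φ₂ + B₀ φ₃ as trilinear functionals on A; that is, for all a₀, a₁, a₂ ∈ A, (b B₀φ₂)(a₀,a₁,a₂) = 2 φ₂(a₀,a₁,a₂) + τ([D,a₀] D^{−1} [D,a₁] D^{−1} [D,a₂] D^{−1}). -/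
noncomputable section

/-- `B₀φ₂(a₀,a₁) = φ₂(1,a₀,a₁) = τ([D,a₀] D⁻¹ [D,a₁] D⁻¹)`. -/
def B0phi2 {R : Type*} [Ring R] [Algebra ℂ R] (τ : R →ₗ[ℂ] ℂ) (D : Rˣ) (a0 a1 : R) : ℂ :=
  τ ((↑D * a0 - a0 * ↑D) * ↑D⁻¹ * (↑D * a1 - a1 * ↑D) * ↑D⁻¹)

/-- Auxiliary: `dd D x = D x D⁻¹ - x`, so that `[D,x] D⁻¹ = dd D x`. -/
def dd {R : Type*} [Ring R] (D : Rˣ) (x : R) : R := (D : R) * x * ↑D⁻¹ - x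

lemma comm_eq_dd {R : Type*} [Ring R] (D : Rˣ) (x : R) :
    ((D : R) * x - x * (D : R)) * ↑D⁻¹ = dd D x := by
  simp [dd, sub_mul, mul_assoc, Units.mul_inv]

lemma dd_mul {R : Type*} [Ring R] (D : Rˣ) (x y : R) :
    dd D (x * y) = dd D x * dd D y + dd D x * y + x * dd D y := by
  have h : ((D : R) * x * ↑D⁻¹) * ((D : R) * y * ↑D⁻¹) = (D : R) * (x * y) * ↑D⁻¹ := by
    calc ((D : R) * x * ↑D⁻¹) * ((D : R) * y * ↑D⁻¹)
        = (D : R) * x * ((↑D⁻¹ * (D : R)) * (y * ↑D⁻¹)) := by noncomm_ring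
      _ = (D : R) * (x * y) * ↑D⁻¹ := by rw [Units.inv_mul]; noncomm_ring
  simp only [dd]
  rw [mul_sub, sub_mul, sub_mul, h]
  noncomm_ring

/-- `b B₀φ₂ = 2φ₂ + B₀φ₃` as trilinear functionals on `A`: for all
`a₀, a₁, a₂ ∈ A`,
`B₀φ₂(a₀a₁,a₂) - B₀φ₂(a₀,a₁a₂) + B₀φ₂(a₂a₀,a₁) = 2φ₂(a₀,a₁,a₂) + B₀φ₃(a₀,a₁,a₂)`. -/
theorem b_B0phi2_eq_two_phi2_add_B0phi3
    {R : Type*} [Ring R] [Algebra ℂ R] (τ : R →ₗ[ℂ] ℂ)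
    (htr : ∀ x y : R, τ (x * y) = τ (y * x)) (D : Rˣ) (A : Subalgebra ℂ R)
    (a0 a1 a2 : R) (h0 : a0 ∈ A) (h1 : a1 ∈ A) (h2 : a2 ∈ A) :
    B0phi2 τ D (a0 * a1) a2 - B0phi2 τ D a0 (a1 * a2) + B0phi2 τ D (a2 * a0) a1
      = 2 * phi2 τ D a0 a1 a2 + B0phi3 τ D a0 a1 a2 := by
  have hB2 : ∀ x y : R, B0phi2 τ D x y = τ (dd D x * dd D y) := by
    intro x y
    simp only [B0phi2]
    rw [mul_assoc (((D : R) * x - x * (D : R)) * ↑D⁻¹), comm_eq_dd, comm_eq_dd]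
  have hB3 : B0phi3 τ D a0 a1 a2 = τ (dd D a0 * (dd D a1 * dd D a2)) := by
    simp only [B0phi3]
    rw [mul_assoc _ ((D : R) * a2 - a2 * (D : R)) (↑D⁻¹ : R),
        mul_assoc (((D : R) * a0 - a0 * (D : R)) * ↑D⁻¹),
        comm_eq_dd, comm_eq_dd, comm_eq_dd, mul_assoc]
  have hP : phi2 τ D a0 a1 a2 = τ (a0 * (dd D a1 * dd D a2)) := by
    simp only [phi2]
    rw [mul_assoc _ ((D : R) * a2 - a2 * (D : R)) (↑D⁻¹ : R),
        mul_assoc a0 ((D : R) * a1 - a1 * (D : R)) (↑D⁻¹ : R),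
        mul_assoc a0, comm_eq_dd, comm_eq_dd]
  rw [hB2, hB2, hB2, hB3, hP, dd_mul D a0 a1, dd_mul D a1 a2, dd_mul D a2 a0]
  have hc : ∀ p q r : R, τ (p * (q * r)) = τ (r * (p * q)) := by
    intro p q r
    rw [← mul_assoc, htr]
  simp only [add_mul, mul_add, map_add, mul_assoc]
  rw [hc (dd D a0) (dd D a1) a2, ← hc (dd D a0) (dd D a1) (dd D a2),
      ← hc a0 (dd D a1) (dd D a2)]
  ring
end
end
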